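/- arXiv:math/0006020 — 8 statements merged into one kernel-verified Lean document; each statement's English description precedes it below -/
import Mathlib

section
/- Let A be an algebra over a field k, let ρ ∈ A ⊗ A be invertible, and let t_d, t_u be commuting algebra automorphisms of A such that (A, ρ, t_d, t_u) is an oriented quantum algebra, i.e. (1) (1_A ⊗ t_u)(ρ) and (t_d ⊗ 1_A)(ρ⁻¹) are inverses in A ⊗ A^{op}, (2) ρ = (t_d ⊗ t_d)(ρ) = (t_u ⊗ t_u)(ρ), and (3) ρ satisfies the quantum Yang–Baxter equation ρ₁₂ρ₁₃ρ₂₃ = ρ₂₃ρ₁₃ρ₁₂. Then (A, ρ, t_u ∘ t_d, id_A) and (A, ρ, id_A, t_d ∘ t_u) are also oriented quantum algebras. -/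
open TensorProduct

noncomputable section

variable (k : Type*) [Field k] (A : Type*) [Ring A] [Algebra k A]

/-- The linear map `A ⊗ A → A ⊗ Aᵐᵒᵖ` used to interpret elements in `A ⊗ Aᵒᵖ`. -/
def toOpTensor : A ⊗[k] A →ₗ[k] A ⊗[k] Aᵐᵒᵖ :=
  TensorProduct.map LinearMap.id (MulOpposite.opLinearEquiv k).toLinearMap

/-- `ρ ↦ ρ₁₂` in `A ⊗ (A ⊗ A)`. -/
def rho12 : A ⊗[k] A →ₐ[k] A ⊗[k] (A ⊗[k] A) :=
  Algebra.TensorProduct.map (AlgHom.id k A) Algebra.TensorProduct.includeLeft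

/-- `ρ ↦ ρ₁₃`. -/
def rho13 : A ⊗[k] A →ₐ[k] A ⊗[k] (A ⊗[k] A) :=
  Algebra.TensorProduct.map (AlgHom.id k A) Algebra.TensorProduct.includeRight

/-- `ρ ↦ ρ₂₃`. -/
def rho23 : A ⊗[k] A →ₐ[k] A ⊗[k] (A ⊗[k] A) :=
  Algebra.TensorProduct.includeRight

/-- The quantum Yang–Baxter equation. -/
def YangBaxter (ρ : A ⊗[k] A) : Prop :=
  rho12 k A ρ * rho13 k A ρ * rho23 k A ρ = rho23 k A ρ * rho13 k A ρ * rho12 k A ρ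

/-- An oriented quantum algebra structure `(A, ρ, t_d, t_u)` (with `ρinv` the inverse of `ρ`). -/
structure OrientedQA (ρ ρinv : A ⊗[k] A) (td tu : A →ₗ[k] A) : Prop where
  td_bij : Function.Bijective td
  tu_bij : Function.Bijective tu
  td_one : td 1 = 1
  td_mul : ∀ a b : A, td (a * b) = td a * td b
  tu_one : tu 1 = 1
  tu_mul : ∀ a b : A, tu (a * b) = tu a * tu b
  comm : ∀ a : A, td (tu a) = tu (td a)
  mul_inv : ρ * ρinv = 1
  inv_mul : ρinv * ρ = 1
  qa1_left : toOpTensor k A (TensorProduct.map LinearMap.id tu ρ) *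
      toOpTensor k A (TensorProduct.map td LinearMap.id ρinv) = 1
  qa1_right : toOpTensor k A (TensorProduct.map td LinearMap.id ρinv) *
      toOpTensor k A (TensorProduct.map LinearMap.id tu ρ) = 1
  qa2_d : TensorProduct.map td td ρ = ρ
  qa2_u : TensorProduct.map tu tu ρ = ρ
  qa3 : YangBaxter k A ρ

/-- Left contraction `(u* ⊗ 1)(ρ)`. -/
def contractL (f : Module.Dual k A) : A ⊗[k] A →ₗ[k] A :=
  (TensorProduct.lid k A).toLinearMap ∘ₗ TensorProduct.map f LinearMap.id

/-- Right contraction `(1 ⊗ v*)(ρ)`. -/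
def contractR (g : Module.Dual k A) : A ⊗[k] A →ₗ[k] A :=
  (TensorProduct.rid k A).toLinearMap ∘ₗ TensorProduct.map LinearMap.id g

/-- The set `A_(ρ)` of all `(u* ⊗ 1)(ρ) + (1 ⊗ v*)(ρ)`. -/
def contractSet (ρ : A ⊗[k] A) : Set A :=
  {x | ∃ f g : Module.Dual k A, x = contractL k A f ρ + contractR k A g ρ}

/-- A quantum algebra `(A, ρ, s)`, with `s` an algebra anti-automorphism. -/
structure QuantumAlgebra (ρ ρinv : A ⊗[k] A) (s : A ≃ₗ[k] A) : Prop where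
  s_one : s 1 = 1
  s_anti : ∀ a b : A, s (a * b) = s b * s a
  mul_inv : ρ * ρinv = 1
  inv_mul : ρinv * ρ = 1
  QA1 : ρinv = TensorProduct.map s.toLinearMap LinearMap.id ρ
  QA2 : TensorProduct.map s.toLinearMap s.toLinearMap ρ = ρ
  QA3 : YangBaxter k A ρ

end

/-!
For an algebra endomorphism `t` of `A`, the maps `t ⊗ 1` and `1 ⊗ t` are algebra endomorphisms
of `A ⊗ Aᵒᵖ`, so they send the inverse pair of (qa.1) to an inverse pair. Applying `t_u ⊗ 1`
turns `(1 ⊗ t_u)(ρ)` into `(t_u ⊗ t_u)(ρ) = ρ` and `(t_d ⊗ 1)(ρ⁻¹)` into `(t_u t_d ⊗ 1)(ρ⁻¹)`.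
Dually, applying `1 ⊗ t_d` turns `(t_d ⊗ 1)(ρ⁻¹)` into `(t_d ⊗ t_d)(ρ⁻¹)`, which is `ρ⁻¹`
because the algebra map `t_d ⊗ t_d` fixes `ρ` and hence its inverse.
-/

theorem TensorProduct.map_id_apply {R M N : Type*} [CommSemiring R] [AddCommMonoid M]
    [AddCommMonoid N] [Module R M] [Module R N] (x : M ⊗[R] N) :
    map (LinearMap.id : M →ₗ[R] M) LinearMap.id x = x := by
  rw [map_id, LinearMap.id_apply]

theorem map_eq_self_of_mul_eq_one {M F : Type*} [Monoid M] [FunLike F M M] [MonoidHomClass F M M]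
    (f : F) {a b : M} (ha : f a = a) (hab : a * b = 1) (hba : b * a = 1) : f b = b :=
  (left_inv_eq_right_inv hba (by rw [← ha, ← map_mul, hab, map_one])).symm

section

open TensorProduct

variable {k : Type*} [Field k] {A : Type*} [Ring A] [Algebra k A]

theorem toOpTensor_map (φ ψ : A →ₐ[k] A) (x : A ⊗[k] A) :
    toOpTensor k A (map φ.toLinearMap ψ.toLinearMap x) =
      Algebra.TensorProduct.map φ ψ.op (toOpTensor k A x) := by
  induction x using TensorProduct.induction_on with
  | zero => simp
  | tmul a b => rfl
  | add x y hx hy => simp only [map_add, hx, hy]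

theorem toOpTensor_map_mul_eq_one (φ ψ : A →ₐ[k] A) {x y : A ⊗[k] A}
    (h : toOpTensor k A x * toOpTensor k A y = 1) :
    toOpTensor k A (map φ.toLinearMap ψ.toLinearMap x) *
      toOpTensor k A (map φ.toLinearMap ψ.toLinearMap y) = 1 := by
  rw [toOpTensor_map, toOpTensor_map, ← map_mul, h, map_one]

namespace OrientedQA

variable {ρ ρinv : A ⊗[k] A} {td tu : A →ₗ[k] A}

def tdHom (h : OrientedQA k A ρ ρinv td tu) : A →ₐ[k] A :=
  AlgHom.ofLinearMap td h.td_one h.td_mul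

def tuHom (h : OrientedQA k A ρ ρinv td tu) : A →ₐ[k] A :=
  AlgHom.ofLinearMap tu h.tu_one h.tu_mul

theorem map_td_td_inv (h : OrientedQA k A ρ ρinv td tu) : map td td ρinv = ρinv :=
  map_eq_self_of_mul_eq_one (Algebra.TensorProduct.map h.tdHom h.tdHom) h.qa2_d h.mul_inv
    h.inv_mul

theorem merge_down (h : OrientedQA k A ρ ρinv td tu) :
    OrientedQA k A ρ ρinv (tu ∘ₗ td) LinearMap.id := by
  have hρ : map tu LinearMap.id (map LinearMap.id tu ρ) = map LinearMap.id LinearMap.id ρ := by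
    rw [map_map, map_id_apply]; exact h.qa2_u
  have hρinv : map tu LinearMap.id (map td LinearMap.id ρinv) =
      map (tu ∘ₗ td) LinearMap.id ρinv :=
    map_map _ _ _ _ _
  exact
    { td_bij := h.tu_bij.comp h.td_bij
      tu_bij := Function.bijective_id
      td_one := (h.tuHom.comp h.tdHom).map_one
      td_mul := (h.tuHom.comp h.tdHom).map_mul
      tu_one := rfl
      tu_mul := fun _ _ => rfl
      comm := fun _ => rfl
      mul_inv := h.mul_inv
      inv_mul := h.inv_mul
      qa1_left := by
        rw [← hρ, ← hρinv]; exact toOpTensor_map_mul_eq_one h.tuHom (AlgHom.id k A) h.qa1_left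
      qa1_right := by
        rw [← hρ, ← hρinv]; exact toOpTensor_map_mul_eq_one h.tuHom (AlgHom.id k A) h.qa1_right
      qa2_d := by rw [← map_map, h.qa2_d, h.qa2_u]
      qa2_u := map_id_apply ρ
      qa3 := h.qa3 }

theorem merge_up (h : OrientedQA k A ρ ρinv td tu) :
    OrientedQA k A ρ ρinv LinearMap.id (td ∘ₗ tu) := by
  have hρ : map LinearMap.id td (map LinearMap.id tu ρ) = map LinearMap.id (td ∘ₗ tu) ρ :=
    map_map _ _ _ _ _
  have hρinv : map LinearMap.id td (map td LinearMap.id ρinv) =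
      map LinearMap.id LinearMap.id ρinv := by
    rw [map_map, map_id_apply]; exact h.map_td_td_inv
  exact
    { td_bij := Function.bijective_id
      tu_bij := h.td_bij.comp h.tu_bij
      td_one := rfl
      td_mul := fun _ _ => rfl
      tu_one := (h.tdHom.comp h.tuHom).map_one
      tu_mul := (h.tdHom.comp h.tuHom).map_mul
      comm := fun _ => rfl
      mul_inv := h.mul_inv
      inv_mul := h.inv_mul
      qa1_left := by
        rw [← hρ, ← hρinv]; exact toOpTensor_map_mul_eq_one (AlgHom.id k A) h.tdHom h.qa1_left
      qa1_right := by
        rw [← hρ, ← hρinv]; exact toOpTensor_map_mul_eq_one (AlgHom.id k A) h.tdHom h.qa1_right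
      qa2_d := map_id_apply ρ
      qa2_u := by rw [← map_map, h.qa2_u, h.qa2_d]
      qa3 := h.qa3 }

end OrientedQA

end

open TensorProduct in
/-- an oriented quantum algebra `(A, ρ, t_d, t_u)` gives rise to the
oriented quantum algebras `(A, ρ, t_u ∘ t_d, 1_A)` and `(A, ρ, 1_A, t_d ∘ t_u)`. -/
theorem toStandard {k : Type*} [Field k] {A : Type*} [Ring A] [Algebra k A]
    (ρ ρinv : A ⊗[k] A) (td tu : A →ₗ[k] A)
    (h : OrientedQA k A ρ ρinv td tu) :
    OrientedQA k A ρ ρinv (tu ∘ₗ td) LinearMap.id ∧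
      OrientedQA k A ρ ρinv LinearMap.id (td ∘ₗ tu) :=
  ⟨h.merge_down, h.merge_up⟩
end

section
/- Let (A, ρ, t_d, t_u) be an oriented quantum algebra over a field k. Then there is a unique minimal oriented quantum subalgebra (A_ρ, ρ, t_d|_{A_ρ}, t_u|_{A_ρ}), where A_ρ is the subalgebra of A generated by A_(ρ) + A_(ρ⁻¹). Furthermore, if (B, ρ, t_d|_B, t_u|_B) is any oriented quantum subalgebra of (A, ρ, t_d, t_u) then A_ρ ⊆ B. -/
open TensorProduct

open TensorProduct

noncomputable section

variable (k : Type*) [Field k] (A : Type*) [Ring A] [Algebra k A]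

/-- `x` lies in `B ⊗ B` viewed inside `A ⊗ A`. -/
def memTensorSq (B : Subalgebra k A) (x : A ⊗[k] A) : Prop :=
  x ∈ LinearMap.range
    (TensorProduct.map (Subalgebra.toSubmodule B).subtype (Subalgebra.toSubmodule B).subtype)

/-- `B` is an oriented quantum subalgebra of `(A, ρ, t_d, t_u)`: `ρ, ρ⁻¹ ∈ B ⊗ B`
and `t_d(B) = t_u(B) = B`. -/
def IsOQSub (ρ ρinv : A ⊗[k] A) (td tu : A →ₗ[k] A) (B : Subalgebra k A) : Prop :=
  memTensorSq k A B ρ ∧ memTensorSq k A B ρinv ∧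
    td '' (B : Set A) = (B : Set A) ∧ tu '' (B : Set A) = (B : Set A)

/-!
Over a field, an element `x` of `M ⊗ N` lies in `E ⊗ F` exactly when every contraction
`(1 ⊗ g)(x)` lies in `E` and every `(f ⊗ 1)(x)` lies in `F`: expand `x` in a basis of one factor,
and extend functionals from `E` to `M`. Hence `ρ, ρ⁻¹ ∈ B ⊗ B` iff `A_(ρ) ∪ A_(ρ⁻¹) ⊆ B`, which
gives both that `ρ, ρ⁻¹ ∈ A_ρ ⊗ A_ρ` and that `A_ρ ⊆ B`. If `t` is an algebra automorphism with
`(t ⊗ t)(ρ) = ρ`, then `t ⊗ t` also fixes `ρ⁻¹`, and `t ((u* ⊗ 1)(ρ)) = ((u* ∘ t⁻¹) ⊗ 1)(ρ)`, so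
`t` maps the generating set `A_(ρ) ∪ A_(ρ⁻¹)` of `A_ρ` onto itself.
-/

section

variable {k M N : Type*} [Field k] [AddCommGroup M] [Module k M] [AddCommGroup N] [Module k N]

theorem mem_range_rTensor_subtype_of_forall_rid_lTensor_mem {E : Submodule k M} {x : M ⊗[k] N}
    (hx : ∀ g : Module.Dual k N, TensorProduct.rid k M (g.lTensor M x) ∈ E) :
    x ∈ LinearMap.range (E.subtype.rTensor N) := by
  classical
  let e := equivFinsuppOfBasisRight (M := M) (Module.Basis.ofVectorSpace k N)
  rw [← e.symm_apply_apply x, equivFinsuppOfBasisRight_symm_apply]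
  refine Submodule.finsuppSum_mem _ _ _ _ fun i _ => ⟨⟨e x i, ?_⟩ ⊗ₜ _, rfl⟩
  rw [equivFinsuppOfBasisRight_apply]
  exact hx _

theorem mem_range_lTensor_subtype_of_forall_lid_rTensor_mem {F : Submodule k N} {x : M ⊗[k] N}
    (hx : ∀ f : Module.Dual k M, TensorProduct.lid k N (f.rTensor N x) ∈ F) :
    x ∈ LinearMap.range (F.subtype.lTensor M) := by
  classical
  let e := equivFinsuppOfBasisLeft (N := N) (Module.Basis.ofVectorSpace k M)
  rw [← e.symm_apply_apply x, equivFinsuppOfBasisLeft_symm_apply]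
  refine Submodule.finsuppSum_mem _ _ _ _ fun i _ => ⟨_ ⊗ₜ ⟨e x i, ?_⟩, rfl⟩
  rw [equivFinsuppOfBasisLeft_apply]
  exact hx _

theorem mem_range_map_subtype_iff {E : Submodule k M} {F : Submodule k N} {x : M ⊗[k] N} :
    x ∈ LinearMap.range (TensorProduct.map E.subtype F.subtype) ↔
      (∀ g : Module.Dual k N, TensorProduct.rid k M (g.lTensor M x) ∈ E) ∧
        ∀ f : Module.Dual k M, TensorProduct.lid k N (f.rTensor N x) ∈ F := by
  constructor
  · rintro ⟨z, rfl⟩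
    induction z using TensorProduct.induction_on with
    | zero => simp
    | tmul a b => exact ⟨fun g => by simpa using E.smul_mem _ a.2,
        fun f => by simpa using F.smul_mem _ b.2⟩
    | add u v hu hv => exact ⟨fun g => by simpa using add_mem (hu.1 g) (hv.1 g),
        fun f => by simpa using add_mem (hu.2 f) (hv.2 f)⟩
  · rintro ⟨hE, hF⟩
    obtain ⟨y, rfl⟩ := mem_range_rTensor_subtype_of_forall_rid_lTensor_mem hE
    have hy (f' : Module.Dual k E) : TensorProduct.lid k N (f'.rTensor N y) ∈ F := by
      obtain ⟨f, rfl⟩ := LinearMap.exists_extend f'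
      simpa [LinearMap.rTensor_comp_apply] using hF f
    obtain ⟨z, rfl⟩ := mem_range_lTensor_subtype_of_forall_lid_rTensor_mem hy
    exact ⟨z, by rw [← LinearMap.rTensor_comp_lTensor, LinearMap.comp_apply]⟩

end

section

variable {k A : Type*} [Field k] [Ring A] [Algebra k A]

theorem memTensorSq_iff_contractSet_subset {B : Subalgebra k A} {x : A ⊗[k] A} :
    memTensorSq k A B x ↔ contractSet k A x ⊆ B := by
  refine mem_range_map_subtype_iff.trans
    ⟨?_, fun h => ⟨fun g => h ⟨0, g, ?_⟩, fun f => h ⟨f, 0, ?_⟩⟩⟩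
  · rintro ⟨hE, hF⟩ _ ⟨f, g, rfl⟩
    exact add_mem (hF f) (hE g)
  · simp [contractL, contractR, LinearMap.lTensor]
  · simp [contractL, contractR, LinearMap.rTensor]

theorem contractL_map (t : A →ₗ[k] A) (f : Module.Dual k A) (x : A ⊗[k] A) :
    contractL k A f (TensorProduct.map t t x) = t (contractL k A (f ∘ₗ t) x) := by
  induction x using TensorProduct.induction_on with
  | zero => simp
  | tmul a b => simp [contractL]
  | add u v hu hv => simp only [map_add, hu, hv]

theorem contractR_map (t : A →ₗ[k] A) (g : Module.Dual k A) (x : A ⊗[k] A) :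
    contractR k A g (TensorProduct.map t t x) = t (contractR k A (g ∘ₗ t) x) := by
  induction x using TensorProduct.induction_on with
  | zero => simp
  | tmul a b => simp [contractR]
  | add u v hu hv => simp only [map_add, hu, hv]

theorem contractSet_subset_image {t : A →ₗ[k] A} {x : A ⊗[k] A}
    (hx : TensorProduct.map t t x = x) : contractSet k A x ⊆ t '' contractSet k A x := by
  rintro _ ⟨f, g, rfl⟩
  exact ⟨_, ⟨f ∘ₗ t, g ∘ₗ t, rfl⟩, by rw [map_add, ← contractL_map, ← contractR_map, hx]⟩

theorem image_contractSet_eq (e : A ≃ₗ[k] A) {x : A ⊗[k] A}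
    (hx : TensorProduct.map e.toLinearMap e.toLinearMap x = x) :
    e '' contractSet k A x = contractSet k A x := by
  have hx' : TensorProduct.map e.symm.toLinearMap e.symm.toLinearMap x = x :=
    (TensorProduct.congr e e).symm_apply_eq.2 hx.symm
  refine subset_antisymm ?_ (contractSet_subset_image hx)
  calc e '' contractSet k A x ⊆ e '' (e.symm '' contractSet k A x) :=
        Set.image_mono (contractSet_subset_image hx')
    _ = contractSet k A x := e.toEquiv.image_symm_image _

theorem image_adjoin_contractSet_eq {t : A →ₗ[k] A} (ht : Function.Bijective t) (ht_one : t 1 = 1)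
    (ht_mul : ∀ a b : A, t (a * b) = t a * t b) {ρ ρinv : A ⊗[k] A}
    (hρ : TensorProduct.map t t ρ = ρ) (hinv_mul : ρinv * ρ = 1) (hmul_inv : ρ * ρinv = 1) :
    t '' (Algebra.adjoin k (contractSet k A ρ ∪ contractSet k A ρinv) : Set A) =
      Algebra.adjoin k (contractSet k A ρ ∪ contractSet k A ρinv) := by
  let e : A ≃ₐ[k] A := AlgEquiv.ofLinearEquiv (LinearEquiv.ofBijective t ht) ht_one ht_mul
  let φ := Algebra.TensorProduct.map e.toAlgHom e.toAlgHom
  have hφ : φ ρ = ρ := hρ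
  have hρinv : TensorProduct.map t t ρinv = ρinv :=
    left_inv_eq_right_inv (show φ ρinv * ρ = 1 by rw [← hφ, ← map_mul, hinv_mul, map_one])
      hmul_inv
  have hS : e '' (contractSet k A ρ ∪ contractSet k A ρinv) =
      contractSet k A ρ ∪ contractSet k A ρinv := by
    rw [Set.image_union]
    exact congrArg₂ (· ∪ ·) (image_contractSet_eq e.toLinearEquiv hρ)
      (image_contractSet_eq e.toLinearEquiv hρinv)
  calc t '' (Algebra.adjoin k (contractSet k A ρ ∪ contractSet k A ρinv) : Set A)
      = ((Algebra.adjoin k (contractSet k A ρ ∪ contractSet k A ρinv)).map e.toAlgHom : Set A) :=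
        (Subalgebra.coe_map e.toAlgHom _).symm
    _ = Algebra.adjoin k (e '' (contractSet k A ρ ∪ contractSet k A ρinv)) := by
        rw [AlgHom.map_adjoin]; rfl
    _ = Algebra.adjoin k (contractSet k A ρ ∪ contractSet k A ρinv) := by rw [hS]

end

/-- an oriented quantum algebra has a unique minimal oriented quantum
subalgebra, namely the subalgebra `A_ρ` generated by `A_(ρ) + A_(ρ⁻¹)`, and `A_ρ` is
contained in every oriented quantum subalgebra. -/
theorem minimal_oriented_quantum_subalgebra {k : Type*} [Field k]
    {A : Type*} [Ring A] [Algebra k A]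
    (ρ ρinv : A ⊗[k] A) (td tu : A →ₗ[k] A)
    (h : OrientedQA k A ρ ρinv td tu) :
    IsOQSub k A ρ ρinv td tu
        (Algebra.adjoin k (contractSet k A ρ ∪ contractSet k A ρinv)) ∧
      ∀ B : Subalgebra k A, IsOQSub k A ρ ρinv td tu B →
        Algebra.adjoin k (contractSet k A ρ ∪ contractSet k A ρinv) ≤ B := by
  refine ⟨⟨?_, ?_, ?_, ?_⟩, fun B hB => ?_⟩
  · exact memTensorSq_iff_contractSet_subset.2
      (Set.subset_union_left.trans Algebra.subset_adjoin)
  · exact memTensorSq_iff_contractSet_subset.2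
      (Set.subset_union_right.trans Algebra.subset_adjoin)
  · exact image_adjoin_contractSet_eq h.td_bij h.td_one h.td_mul h.qa2_d h.inv_mul h.mul_inv
  · exact image_adjoin_contractSet_eq h.tu_bij h.tu_one h.tu_mul h.qa2_u h.inv_mul h.mul_inv
  · exact Algebra.adjoin_le (Set.union_subset (memTensorSq_iff_contractSet_subset.1 hB.1)
      (memTensorSq_iff_contractSet_subset.1 hB.2.1))

end
end

section
/- Let (A, ρ, s) be a quantum algebra over a field k, i.e. A an algebra, ρ ∈ A ⊗ A invertible, s: A → A^{op} an algebra isomorphism with ρ⁻¹ = (s ⊗ 1_A)(ρ), ρ = (s ⊗ s)(ρ), and ρ satisfying the quantum Yang–Baxter equation. Then (A, ρ, 1_A, s⁻²) is a standard oriented quantum algebra: in particular, (1_A ⊗ s⁻²)(ρ) and ρ⁻¹ are inverses in A ⊗ A^{op}. -/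
open TensorProduct

/-! By (QA.2), `(1 ⊗ s⁻¹)(ρ) = (s ⊗ 1)(ρ)`, which is `ρ⁻¹` by (QA.1). Followed by
`A ⊗ A → A ⊗ Aᵐᵒᵖ`, the map `1 ⊗ s⁻¹` is an algebra map because `s⁻¹` is an anti-automorphism;
it sends the mutually inverse `ρ⁻¹` and `ρ` to `(1 ⊗ s⁻²)(ρ)` and `ρ⁻¹`, which are therefore
inverse in `A ⊗ Aᵐᵒᵖ`. -/

section

variable {R M : Type*} [CommSemiring R] [AddCommMonoid M] [Module R M]

lemma TensorProduct.map_symm_symm_eq_self {s : M ≃ₗ[R] M} {ρ : M ⊗[R] M}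
    (h : map s.toLinearMap s.toLinearMap ρ = ρ) :
    map s.symm.toLinearMap s.symm.toLinearMap ρ = ρ := by
  conv_lhs => rw [← h]
  rw [← LinearMap.comp_apply, ← map_comp, s.symm_comp, map_id, LinearMap.id_apply]

lemma TensorProduct.map_id_symm_eq_map_id_left {s : M ≃ₗ[R] M} {ρ : M ⊗[R] M}
    (h : map s.toLinearMap s.toLinearMap ρ = ρ) :
    map LinearMap.id s.symm.toLinearMap ρ = map s.toLinearMap LinearMap.id ρ := by
  conv_lhs => rw [← h]
  rw [← LinearMap.comp_apply, ← map_comp, s.symm_comp, LinearMap.id_comp]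

end

section

variable {R A : Type*} [CommSemiring R] [Semiring A] [Algebra R A]

lemma LinearEquiv.symm_map_one_of_map_one {s : A ≃ₗ[R] A} (h : s 1 = 1) : s.symm 1 = 1 :=
  s.symm_apply_eq.mpr h.symm

lemma LinearEquiv.symm_map_mul_rev {s : A ≃ₗ[R] A} (h : ∀ a b : A, s (a * b) = s b * s a)
    (a b : A) : s.symm (a * b) = s.symm b * s.symm a :=
  s.symm_apply_eq.mpr <| by rw [h, s.apply_symm_apply, s.apply_symm_apply]

def AlgHom.opOfAnti (f : A →ₗ[R] A) (h₁ : f 1 = 1) (hmul : ∀ a b : A, f (a * b) = f b * f a) :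
    A →ₐ[R] Aᵐᵒᵖ :=
  AlgHom.ofLinearMap ((MulOpposite.opLinearEquiv R).toLinearMap ∘ₗ f)
    (by simp [h₁]) (by simp [hmul])

end

section

variable {k A : Type*} [Field k] [Ring A] [Algebra k A]

lemma toOpTensor_map_id_eq_map_opOfAnti (f : A →ₗ[k] A) (h₁ : f 1 = 1)
    (hmul : ∀ a b : A, f (a * b) = f b * f a) (x : A ⊗[k] A) :
    toOpTensor k A (map LinearMap.id f x) =
      Algebra.TensorProduct.map (AlgHom.id k A) (AlgHom.opOfAnti f h₁ hmul) x := by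
  induction x using TensorProduct.induction_on with
  | zero => simp
  | tmul a b => rfl
  | add u v hu hv => simp only [map_add, hu, hv]

lemma toOpTensor_map_id_mul_eq_one_of_anti (f : A →ₗ[k] A) (h₁ : f 1 = 1)
    (hmul : ∀ a b : A, f (a * b) = f b * f a) {x y : A ⊗[k] A} (hxy : x * y = 1) :
    toOpTensor k A (map LinearMap.id f x) * toOpTensor k A (map LinearMap.id f y) = 1 := by
  rw [toOpTensor_map_id_eq_map_opOfAnti f h₁ hmul, toOpTensor_map_id_eq_map_opOfAnti f h₁ hmul,
    ← map_mul, hxy, map_one]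

end

/-- a quantum algebra `(A, ρ, s)` gives rise to the standard oriented
quantum algebra `(A, ρ, 1_A, s⁻²)`; in particular `(1_A ⊗ s⁻²)(ρ)` and `ρ⁻¹` are
inverses in `A ⊗ Aᵒᵖ`. -/
theorem quantumAlgebra_to_standard_oriented {k : Type*} [Field k]
    {A : Type*} [Ring A] [Algebra k A]
    (ρ ρinv : A ⊗[k] A) (s : A ≃ₗ[k] A)
    (h : QuantumAlgebra k A ρ ρinv s) :
    OrientedQA k A ρ ρinv LinearMap.id (s.symm.trans s.symm).toLinearMap := by
  have one := LinearEquiv.symm_map_one_of_map_one h.s_one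
  have anti := LinearEquiv.symm_map_mul_rev h.s_anti
  have hsq : (s.symm.trans s.symm).toLinearMap = s.symm.toLinearMap ∘ₗ s.symm.toLinearMap :=
    rfl
  have hρinv : map LinearMap.id s.symm.toLinearMap ρ = ρinv := by
    rw [h.QA1, map_id_symm_eq_map_id_left h.QA2]
  have h_up : map LinearMap.id (s.symm.trans s.symm).toLinearMap ρ =
      map LinearMap.id s.symm.toLinearMap ρinv := by
    rw [hsq, ← hρinv, ← LinearMap.comp_apply, ← map_comp, LinearMap.id_comp]
  have h_down : map LinearMap.id LinearMap.id ρinv = map LinearMap.id s.symm.toLinearMap ρ := by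
    rw [map_id, LinearMap.id_apply, hρinv]
  refine ⟨Function.bijective_id, (s.symm.trans s.symm).bijective, rfl, fun _ _ => rfl,
    ?_, ?_, fun _ => rfl, h.mul_inv, h.inv_mul, ?_, ?_, by rw [map_id, LinearMap.id_apply],
    ?_, h.QA3⟩
  · simp [one]
  · simp [anti]
  · rw [h_up, h_down]
    exact toOpTensor_map_id_mul_eq_one_of_anti _ one anti h.inv_mul
  · rw [h_up, h_down]
    exact toOpTensor_map_id_mul_eq_one_of_anti _ one anti h.mul_inv
  · have hsymm := map_symm_symm_eq_self h.QA2
    rw [hsq, map_comp, LinearMap.comp_apply, hsymm, hsymm]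
end

section
/- Let (A, ρ, s) be a minimal quantum algebra over a field k (i.e. A is generated as an algebra by A_(ρ)), and suppose (A, ρ, 1_A, t) is a standard oriented quantum algebra over k for some algebra automorphism t of A. Then t = s⁻². -/
open TensorProduct

/-! Writing `v = s⁻¹`, the axioms of a quantum algebra give `ρ⁻¹ = (1 ⊗ v)(ρ)`. Since `v` is an
anti-automorphism, `a ⊗ b ↦ a ⊗ op (v b)` is an algebra map `A ⊗ A → A ⊗ Aᵒᵖ`; applied to
`ρ ρ⁻¹ = 1` it shows that `(1 ⊗ v²)(ρ)` is a right inverse of `ρ⁻¹` in `A ⊗ Aᵒᵖ`, while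
`(1 ⊗ t)(ρ)` is a left inverse of it, so the two agree. The invariance of `ρ` under `t ⊗ t` and
`v² ⊗ v²` turns this into `(t ⊗ 1)(ρ) = (v² ⊗ 1)(ρ)`. Hence `t` and `v²` agree on `A_(ρ)`, and,
both being algebra maps, on the algebra it generates. -/

section

open TensorProduct

theorem TensorProduct.map_left_eq_of_map_right_eq {R M : Type*} [CommSemiring R]
    [AddCommMonoid M] [Module R M] {f : M →ₗ[R] M} {g : M ≃ₗ[R] M} {x : M ⊗[R] M}
    (hf : map f f x = x) (hg : map (g : M →ₗ[R] M) g x = x)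
    (h : map LinearMap.id f x = map LinearMap.id (g : M →ₗ[R] M) x) :
    map f LinearMap.id x = map (g : M →ₗ[R] M) LinearMap.id x := by
  have hfg : map f (g : M →ₗ[R] M) x = map (g : M →ₗ[R] M) g x :=
    calc map f (g : M →ₗ[R] M) x
        = map f LinearMap.id (map LinearMap.id (g : M →ₗ[R] M) x) := by rw [map_map]; rfl
      _ = map f f x := by rw [← h, map_map]; rfl
      _ = map (g : M →ₗ[R] M) g x := hf.trans hg.symm
  calc map f LinearMap.id x
      = map LinearMap.id (g.symm : M →ₗ[R] M) (map f (g : M →ₗ[R] M) x) := by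
        rw [map_map, LinearMap.id_comp, LinearEquiv.comp_coe, LinearEquiv.self_trans_symm]; rfl
    _ = map (g : M →ₗ[R] M) LinearMap.id x := by
        rw [hfg, map_map, LinearMap.id_comp, LinearEquiv.comp_coe, LinearEquiv.self_trans_symm]
        rfl

variable {k : Type*} [Field k] {A : Type*} [Ring A] [Algebra k A]

theorem contractL_map_id (f : Module.Dual k A) (u : A →ₗ[k] A) (x : A ⊗[k] A) :
    contractL k A f (map LinearMap.id u x) = u (contractL k A f x) := by
  induction x using TensorProduct.induction_on with
  | zero => simp
  | add x y hx hy => simp only [map_add, hx, hy]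
  | tmul a b => simp [contractL]

theorem contractR_map_id (g : Module.Dual k A) (u : A →ₗ[k] A) (x : A ⊗[k] A) :
    contractR k A g (map u LinearMap.id x) = u (contractR k A g x) := by
  induction x using TensorProduct.induction_on with
  | zero => simp
  | add x y hx hy => simp only [map_add, hx, hy]
  | tmul a b => simp [contractR]

theorem eqOn_contractSet {f g : A →ₗ[k] A} {ρ : A ⊗[k] A}
    (hright : map LinearMap.id f ρ = map LinearMap.id g ρ)
    (hleft : map f LinearMap.id ρ = map g LinearMap.id ρ) :
    Set.EqOn f g (contractSet k A ρ) := by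
  rintro _ ⟨u, v, rfl⟩
  rw [map_add, map_add, ← contractL_map_id, ← contractR_map_id, hright, hleft,
    contractL_map_id, contractR_map_id]

theorem toOpTensor_injective : Function.Injective (toOpTensor k A) :=
  (TensorProduct.congr (LinearEquiv.refl k A) (MulOpposite.opLinearEquiv k)).injective

def opAlgHomOfAnti (v : A →ₗ[k] A) (h1 : v 1 = 1) (hmul : ∀ a b, v (a * b) = v b * v a) :
    A →ₐ[k] Aᵐᵒᵖ :=
  AlgHom.ofLinearMap ((MulOpposite.opLinearEquiv k).toLinearMap ∘ₗ v) (by simp [h1])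
    (by simp [hmul])

theorem toOpTensor_map_id (v : A →ₗ[k] A) (h1 : v 1 = 1) (hmul : ∀ a b, v (a * b) = v b * v a)
    (x : A ⊗[k] A) :
    toOpTensor k A (map LinearMap.id v x) =
      Algebra.TensorProduct.map (AlgHom.id k A) (opAlgHomOfAnti v h1 hmul) x := by
  induction x using TensorProduct.induction_on with
  | zero => simp
  | add x y hx hy => simp only [map_add, hx, hy]
  | tmul a b => rfl

namespace QuantumAlgebra

variable {ρ ρinv : A ⊗[k] A} {s : A ≃ₗ[k] A}

theorem symm_map_one (h : QuantumAlgebra k A ρ ρinv s) : s.symm 1 = 1 := by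
  rw [LinearEquiv.symm_apply_eq, h.s_one]

theorem symm_map_mul (h : QuantumAlgebra k A ρ ρinv s) (a b : A) :
    s.symm (a * b) = s.symm b * s.symm a := by
  rw [LinearEquiv.symm_apply_eq, h.s_anti, LinearEquiv.apply_symm_apply,
    LinearEquiv.apply_symm_apply]

def antipodeInvSq (h : QuantumAlgebra k A ρ ρinv s) : A ≃ₐ[k] A :=
  AlgEquiv.ofLinearEquiv (s.symm.trans s.symm) (by simp [h.symm_map_one])
    (by simp [h.symm_map_mul])

theorem map_symm_symm (h : QuantumAlgebra k A ρ ρinv s) :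
    map (s.symm : A →ₗ[k] A) s.symm ρ = ρ := by
  conv_lhs => rw [← h.QA2]
  rw [map_map, LinearEquiv.comp_coe, LinearEquiv.self_trans_symm]
  exact congrArg (· ρ) map_id

theorem map_symm_trans_symm (h : QuantumAlgebra k A ρ ρinv s) :
    map (s.symm.trans s.symm : A →ₗ[k] A) (s.symm.trans s.symm) ρ = ρ := by
  rw [LinearEquiv.coe_trans, ← map_map, h.map_symm_symm, h.map_symm_symm]

theorem inv_eq_map_id_symm (h : QuantumAlgebra k A ρ ρinv s) :
    ρinv = map LinearMap.id (s.symm : A →ₗ[k] A) ρ := by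
  rw [h.QA1]
  conv_lhs => rw [← h.map_symm_symm]
  rw [map_map, LinearEquiv.comp_coe, LinearEquiv.symm_trans_self, LinearMap.id_comp]
  rfl

theorem toOpTensor_inv_mul_map_id_symm_trans_symm (h : QuantumAlgebra k A ρ ρinv s) :
    toOpTensor k A ρinv *
      toOpTensor k A (map LinearMap.id (s.symm.trans s.symm : A →ₗ[k] A) ρ) = 1 := by
  set Φ := Algebra.TensorProduct.map (AlgHom.id k A)
    (opAlgHomOfAnti (s.symm : A →ₗ[k] A) h.symm_map_one h.symm_map_mul)
  have hinv : toOpTensor k A ρinv = Φ ρ := by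
    rw [h.inv_eq_map_id_symm, toOpTensor_map_id]
  have hsq :
      toOpTensor k A (map LinearMap.id (s.symm.trans s.symm : A →ₗ[k] A) ρ) = Φ ρinv := by
    rw [h.inv_eq_map_id_symm, ← toOpTensor_map_id, map_map, LinearEquiv.coe_trans,
      LinearMap.id_comp]
  rw [hinv, hsq, ← map_mul, h.mul_inv, map_one]

theorem map_id_eq_of_orientedQA (h : QuantumAlgebra k A ρ ρinv s) {t : A →ₗ[k] A}
    (ht : OrientedQA k A ρ ρinv LinearMap.id t) :
    map LinearMap.id t ρ = map LinearMap.id (s.symm.trans s.symm : A →ₗ[k] A) ρ := by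
  have hleftInv := ht.qa1_left
  rw [map_id, LinearMap.id_apply] at hleftInv
  exact toOpTensor_injective
    (left_inv_eq_right_inv hleftInv h.toOpTensor_inv_mul_map_id_symm_trans_symm)

end QuantumAlgebra

end

open TensorProduct in
/-- if `(A, ρ, s)` is a minimal quantum algebra (i.e. `A` is generated as
an algebra by `A_(ρ)`) and `(A, ρ, 1_A, t)` is a standard oriented quantum algebra,
then `t = s⁻²`. -/
theorem standard_auto_eq_antipode_sq_inv {k : Type*} [Field k]
    {A : Type*} [Ring A] [Algebra k A]
    (ρ ρinv : A ⊗[k] A) (s : A ≃ₗ[k] A)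
    (h : QuantumAlgebra k A ρ ρinv s)
    (hmin : Algebra.adjoin k (contractSet k A ρ) = ⊤)
    (t : A →ₗ[k] A)
    (ht : OrientedQA k A ρ ρinv LinearMap.id t) :
    t = (s.symm.trans s.symm).toLinearMap := by
  have hright := h.map_id_eq_of_orientedQA ht
  have hleft := map_left_eq_of_map_right_eq ht.qa2_u h.map_symm_trans_symm hright
  have hT : AlgHom.ofLinearMap t ht.tu_one ht.tu_mul = (h.antipodeInvSq : A →ₐ[k] A) :=
    AlgHom.ext_of_adjoin_eq_top hmin (eqOn_contractSet hright hleft)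
  exact LinearMap.ext fun a => DFunLike.congr_fun hT a
end

section
/- Let k be a field of characteristic not 2, and let A = A_{2,−1} be Sweedler's 4-dimensional Hopf algebra, generated by a, x with a² = 1, x² = 0, xa = −ax. Fix α ∈ k* and let ρ_α = (1/2)(1⊗1 + 1⊗a + a⊗1 − a⊗a) + (α/2)(x⊗x + x⊗ax + ax⊗ax − ax⊗x). If t is an algebra automorphism of A satisfying ρ_α = (t ⊗ t)(ρ_α), then t(a) = a and t(x) = x or t(x) = −x. -/
open TensorProduct

/-!
Write `u ∈ A` as `c₀ + c₁ a + c₂ x + c₃ ax`; then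
`u² = (c₀² + c₁²) + 2c₀c₁ a + 2c₀c₂ x + 2c₀c₃ ax`. Hence (as `2 ≠ 0`) the square-zero elements `t x`, `t (ax)` lie in `span {x, ax}`, and the
involution `t a` has `c₀c₁ = 0`. The nilpotent part of `ρ_α` has no `1 ⊗ _` component, so the
`1 ⊗ _` components of `(t ⊗ t) ρ_α = ρ_α` read `c₁ (1 - c₀) = 1`, `c₂ (1 - c₀) = c₃ (1 - c₀) = 0`,
giving `t a = a`. Then `t (ax) = a t x`, and for `t x = p x + q ax` the `x ⊗ x`, `x ⊗ ax`,
`ax ⊗ x` components give `p² + q² = 1` and `p² - q² ± 2pq = 1`, so `q = 0` and `p = ±1`.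
-/

namespace Sweedler

variable {k A : Type*} [Field k] [Ring A] [Algebra k A]

/-- `ρ_α` is `rho α a x (a * x)`. -/
def rho (α : k) (u v w : A) : A ⊗[k] A :=
  (1 / 2 : k) • (1 ⊗ₜ[k] 1 + 1 ⊗ₜ[k] u + u ⊗ₜ[k] 1 - u ⊗ₜ[k] u) +
    (α / 2) • (v ⊗ₜ[k] v + v ⊗ₜ[k] w + w ⊗ₜ[k] w - w ⊗ₜ[k] v)

theorem map_rho (t : A →ₗ[k] A) (ht1 : t 1 = 1) (α : k) (u v w : A) :
    map t t (rho α u v w) = rho α (t u) (t v) (t w) := by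
  simp only [rho, map_add, map_sub, map_smul, map_tmul, ht1]

theorem repr_rho {ι : Type*} (b : Module.Basis ι k A) (α : k) (u v w : A) (i j : ι) :
    (b.tensorProduct b).repr (rho α u v w) (i, j) =
      (1 / 2) * (b.repr 1 i * b.repr 1 j + b.repr 1 i * b.repr u j + b.repr u i * b.repr 1 j
          - b.repr u i * b.repr u j) +
        α / 2 * (b.repr v i * b.repr v j + b.repr v i * b.repr w j + b.repr w i * b.repr w j
          - b.repr w i * b.repr v j) := by
  simp only [rho, map_add, map_sub, map_smul, Finsupp.add_apply, Finsupp.sub_apply,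
    Finsupp.smul_apply, Module.Basis.tensorProduct_repr_tmul_apply, smul_eq_mul]
  ring

theorem ax_mul_ax_eq_zero {a x : A} (hx : x * x = 0) (hxa : x * a = -(a * x)) :
    a * x * (a * x) = 0 := by
  simp [mul_assoc, ← mul_assoc x, hxa, hx]

theorem mul_self_expand {a x : A} (ha : a * a = 1) (hx : x * x = 0) (hxa : x * a = -(a * x))
    (c₀ c₁ c₂ c₃ : k) :
    (c₀ • 1 + c₁ • a + c₂ • x + c₃ • (a * x)) * (c₀ • 1 + c₁ • a + c₂ • x + c₃ • (a * x)) =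
      (c₀ * c₀ + c₁ * c₁) • 1 + (2 * c₀ * c₁) • a + (2 * c₀ * c₂) • x +
        (2 * c₀ * c₃) • (a * x) := by
  have hax : a * (a * x) = x := by rw [← mul_assoc, ha, one_mul]
  have haxa : a * x * a = -x := by rw [mul_assoc, hxa, mul_neg, hax]
  have hxax : x * (a * x) = 0 := by
    rw [← mul_assoc, hxa, neg_mul, mul_assoc, hx, mul_zero, neg_zero]
  have haxx : a * x * x = 0 := by rw [mul_assoc, hx, mul_zero]
  simp only [mul_add, add_mul, smul_mul_assoc, mul_smul_comm, one_mul, mul_one,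
    ha, hx, hxa, hax, haxa, hxax, haxx, ax_mul_ax_eq_zero hx hxa, smul_neg, smul_zero]
  module

variable {a x : A} {b : Module.Basis (Fin 4) k A}

theorem repr_one (hb : ⇑b = ![1, a, x, a * x]) : b.repr 1 = Finsupp.single 0 1 := by
  rw [show (1 : A) = b 0 by simp [hb], b.repr_self]

theorem repr_a (hb : ⇑b = ![1, a, x, a * x]) : b.repr a = Finsupp.single 1 1 := by
  rw [show a = b 1 by simp [hb], b.repr_self]

theorem repr_x (hb : ⇑b = ![1, a, x, a * x]) : b.repr x = Finsupp.single 2 1 := by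
  rw [show x = b 2 by simp [hb], b.repr_self]

theorem repr_ax (hb : ⇑b = ![1, a, x, a * x]) : b.repr (a * x) = Finsupp.single 3 1 := by
  rw [show a * x = b 3 by simp [hb], b.repr_self]

theorem sum_repr_four (hb : ⇑b = ![1, a, x, a * x]) (u : A) :
    b.repr u 0 • 1 + b.repr u 1 • a + b.repr u 2 • x + b.repr u 3 • (a * x) = u := by
  conv_rhs => rw [← b.sum_repr u]
  simp [Fin.sum_univ_four, hb]

theorem repr_mul_self (hb : ⇑b = ![1, a, x, a * x])
    (ha : a * a = 1) (hx : x * x = 0) (hxa : x * a = -(a * x)) (u : A) :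
    b.repr (u * u) 0 = b.repr u 0 * b.repr u 0 + b.repr u 1 * b.repr u 1 ∧
      b.repr (u * u) 1 = 2 * b.repr u 0 * b.repr u 1 := by
  have h := mul_self_expand ha hx hxa (b.repr u 0) (b.repr u 1) (b.repr u 2) (b.repr u 3)
  rw [sum_repr_four hb] at h
  simp [h, repr_one hb, repr_a hb, repr_x hb, repr_ax hb]

theorem exists_eq_of_mul_self_eq_zero (hb : ⇑b = ![1, a, x, a * x])
    (ha : a * a = 1) (hx : x * x = 0) (hxa : x * a = -(a * x)) (h2 : (2 : k) ≠ 0)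
    {u : A} (hu : u * u = 0) : ∃ p q : k, u = p • x + q • (a * x) := by
  obtain ⟨h0, h1⟩ := repr_mul_self hb ha hx hxa u
  simp only [hu, map_zero, Finsupp.zero_apply] at h0 h1
  have hprod : b.repr u 0 * b.repr u 1 = 0 :=
    (mul_eq_zero.mp (by linear_combination -h1)).resolve_left h2
  have hc : b.repr u 0 = 0 ∧ b.repr u 1 = 0 := by
    rcases mul_eq_zero.mp hprod with hc | hc
    · exact ⟨hc, by simpa [hc] using h0.symm⟩
    · exact ⟨by simpa [hc] using h0.symm, hc⟩
  refine ⟨b.repr u 2, b.repr u 3, ?_⟩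
  conv_lhs => rw [← sum_repr_four hb u, hc.1, hc.2]
  simp

theorem repr_zero_mul_repr_one_eq_zero_of_mul_self_eq_one (hb : ⇑b = ![1, a, x, a * x])
    (ha : a * a = 1) (hx : x * x = 0) (hxa : x * a = -(a * x)) (h2 : (2 : k) ≠ 0)
    {u : A} (hu : u * u = 1) : b.repr u 0 * b.repr u 1 = 0 := by
  have h1 := (repr_mul_self hb ha hx hxa u).2
  rw [hu, repr_one hb, Finsupp.single_eq_of_ne (by decide), mul_assoc] at h1
  exact (mul_eq_zero.mp h1.symm).resolve_left h2

theorem eq_a_of_rho_eq (hb : ⇑b = ![1, a, x, a * x])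
    (ha : a * a = 1) (hx : x * x = 0) (hxa : x * a = -(a * x)) (h2 : (2 : k) ≠ 0)
    {α p q p' q' : k} {u : A} (hu : u * u = 1)
    (h : rho α u (p • x + q • (a * x)) (p' • x + q' • (a * x)) = rho α a x (a * x)) : u = a := by
  have hc := repr_zero_mul_repr_one_eq_zero_of_mul_self_eq_one hb ha hx hxa h2 hu
  have hrow (j : Fin 4) := congrArg (fun z => (b.tensorProduct b).repr z (0, j)) h
  have e1 := hrow 1
  have e2 := hrow 2
  have e3 := hrow 3
  simp only [repr_rho, repr_one hb, repr_a hb, repr_x hb, repr_ax hb, Fin.isValue, one_div,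
    Finsupp.single_eq_same, ne_eq, one_ne_zero, zero_ne_one, Fin.reduceEq, not_false_eq_true,
    Finsupp.single_eq_of_ne, map_add, map_smul, Finsupp.smul_single, smul_eq_mul, Finsupp.coe_add,
    Pi.add_apply, mul_zero, zero_mul, mul_one, one_mul, zero_add, add_zero, sub_self,
    sub_zero] at e1 e2 e3
  field_simp at e1 e2 e3
  have hu1 : b.repr u 1 = 1 := by linear_combination e1 + hc
  have hu0 : b.repr u 0 = 0 := by simpa [hu1] using hc
  have hu2 : b.repr u 2 = 0 := by simpa [hu0] using e2
  have hu3 : b.repr u 3 = 0 := by simpa [hu0] using e3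
  rw [← sum_repr_four hb u, hu0, hu1, hu2, hu3]
  simp

theorem eq_x_or_eq_neg_x_of_rho_eq (hb : ⇑b = ![1, a, x, a * x]) (ha : a * a = 1)
    (h2 : (2 : k) ≠ 0) {α p q : k} (hα : α ≠ 0)
    (h : rho α a (p • x + q • (a * x)) (a * (p • x + q • (a * x))) = rho α a x (a * x)) :
    p • x + q • (a * x) = x ∨ p • x + q • (a * x) = -x := by
  have hav : a * (p • x + q • (a * x)) = q • x + p • (a * x) := by
    rw [mul_add, mul_smul_comm, mul_smul_comm, ← mul_assoc, ha, one_mul, add_comm]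
  rw [hav] at h
  have hcoord (i j : Fin 4) := congrArg (fun z => (b.tensorProduct b).repr z (i, j)) h
  have e22 := hcoord 2 2
  have e23 := hcoord 2 3
  have e32 := hcoord 3 2
  simp only [repr_rho, repr_one hb, repr_a hb, repr_x hb, repr_ax hb, Fin.isValue, one_div,
    Finsupp.single_eq_same, ne_eq, Fin.reduceEq, not_false_eq_true, Finsupp.single_eq_of_ne,
    map_add, map_smul, Finsupp.smul_single, smul_eq_mul, Finsupp.coe_add, Pi.add_apply, mul_zero,
    mul_one, mul_neg, zero_add, add_zero, sub_self, sub_zero, zero_sub] at e22 e23 e32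
  field_simp at e22 e23 e32
  have hq : q = 0 := by
    have h4 : (2 * 2 : k) * (q * q) = 0 := by linear_combination 2 * e22 - e23 + e32
    simpa [h2] using h4
  have hp : p * p = 1 := by linear_combination e22 - q * hq
  rcases mul_self_eq_one_iff.mp hp with rfl | rfl <;> simp [hq]

end Sweedler

theorem sweedler_auto_fixing_rho_general {k : Type*} [Field k] (hchar : (2 : k) ≠ 0)
    {A : Type*} [Ring A] [Algebra k A] (a x : A)
    (ha : a * a = 1) (hx : x * x = 0) (hxa : x * a = -(a * x))
    (hind : LinearIndependent k ![(1 : A), a, x, a * x])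
    (hspan : Submodule.span k {(1 : A), a, x, a * x} = ⊤)
    (α : k) (hα : α ≠ 0)
    (ρ : A ⊗[k] A)
    (hρ : ρ = (1 / 2 : k) •
        (1 ⊗ₜ[k] 1 + 1 ⊗ₜ[k] a + a ⊗ₜ[k] 1 - a ⊗ₜ[k] a) +
      (α / 2) •
        (x ⊗ₜ[k] x + x ⊗ₜ[k] (a * x) + (a * x) ⊗ₜ[k] (a * x) - (a * x) ⊗ₜ[k] x))
    (t : A →ₗ[k] A)
    (ht1 : t 1 = 1) (htm : ∀ u v : A, t (u * v) = t u * t v)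
    (hfix : TensorProduct.map t t ρ = ρ) :
    t a = a ∧ (t x = x ∨ t x = -x) := by
  let b := Module.Basis.mk hind (by
    simp only [Matrix.range_cons, Matrix.range_empty, Set.union_empty, Set.singleton_union, hspan,
      le_refl])
  have hb : ⇑b = ![1, a, x, a * x] := Module.Basis.coe_mk _ _
  have hrho : Sweedler.rho α (t a) (t x) (t (a * x)) = Sweedler.rho α a x (a * x) := by
    rw [← Sweedler.map_rho t ht1, ← show ρ = Sweedler.rho α a x (a * x) from hρ, hfix]
  have hnil (u : A) (hu : u * u = 0) : t u * t u = 0 := by rw [← htm, hu, map_zero]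
  obtain ⟨p, q, htx⟩ := Sweedler.exists_eq_of_mul_self_eq_zero hb ha hx hxa hchar (hnil x hx)
  obtain ⟨p', q', htax⟩ := Sweedler.exists_eq_of_mul_self_eq_zero hb ha hx hxa hchar
    (hnil _ (Sweedler.ax_mul_ax_eq_zero hx hxa))
  have hta : t a = a := by
    rw [htx, htax] at hrho
    exact Sweedler.eq_a_of_rho_eq hb ha hx hxa hchar (by rw [← htm, ha, ht1]) hrho
  refine ⟨hta, ?_⟩
  rw [htm, hta, htx] at hrho
  rw [htx]
  exact Sweedler.eq_x_or_eq_neg_x_of_rho_eq hb ha hchar hα hrho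

/-- for Sweedler's 4-dimensional Hopf algebra `A = A_{2,-1}` over a field
of characteristic not 2 (presented by generators `a, x` with `a² = 1`, `x² = 0`,
`xa = -ax` and basis `{1, a, x, ax}`), and `ρ_α` as given with `α ≠ 0`: any algebra
automorphism `t` of `A` with `(t ⊗ t)(ρ_α) = ρ_α` satisfies `t(a) = a` and
`t(x) = x` or `t(x) = -x`. -/
theorem sweedler_auto_fixing_rho {k : Type*} [Field k] (hchar : (2 : k) ≠ 0)
    {A : Type*} [Ring A] [Algebra k A] (a x : A)
    (ha : a * a = 1) (hx : x * x = 0) (hxa : x * a = -(a * x))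
    (hind : LinearIndependent k ![(1 : A), a, x, a * x])
    (hspan : Submodule.span k {(1 : A), a, x, a * x} = ⊤)
    (α : k) (hα : α ≠ 0)
    (ρ : A ⊗[k] A)
    (hρ : ρ = (1 / 2 : k) •
        (1 ⊗ₜ[k] 1 + 1 ⊗ₜ[k] a + a ⊗ₜ[k] 1 - a ⊗ₜ[k] a) +
      (α / 2) •
        (x ⊗ₜ[k] x + x ⊗ₜ[k] (a * x) + (a * x) ⊗ₜ[k] (a * x) - (a * x) ⊗ₜ[k] x))
    (t : A →ₗ[k] A) (htbij : Function.Bijective t)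
    (ht1 : t 1 = 1) (htm : ∀ u v : A, t (u * v) = t u * t v)
    (hfix : TensorProduct.map t t ρ = ρ) :
    t a = a ∧ (t x = x ∨ t x = -x) :=
  sweedler_auto_fixing_rho_general hchar a x ha hx hxa hind hspan α hα ρ hρ t ht1 htm hfix
end

section
/- Let k be a field and a, b, c, d, x ∈ k*. The 4×4 matrix R = [[a,0,0,0],[0,b,x,0],[0,0,c,0],[0,0,0,d]] (acting on k² ⊗ k²) satisfies the quantum Yang–Baxter equation R₁₂R₁₃R₂₃ = R₂₃R₁₃R₁₂ if and only if x(a² − bc) = x²a and x(d² − bc) = x²d, equivalently (since x ≠ 0): a² ≠ bc, (a = d or ad = −bc), and x = a − bc/a, in which case also x = d − bc/d. -/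
open TensorProduct

noncomputable section YBAux
open Matrix TensorProduct

variable {k : Type*} [Field k]

abbrev M2' (k : Type*) [Field k] := Matrix (Fin 2) (Fin 2) k

def psiA (k : Type*) [Field k] (A : Type*) [Ring A] [Algebra k A] :
    M2' k ⊗[k] A ≃ₐ[k] Matrix (Fin 2) (Fin 2) A :=
  (Algebra.TensorProduct.comm k _ _).trans (matrixEquivTensor (Fin 2) k A).symm

theorem psiA_tmul (A : Type*) [Ring A] [Algebra k A] (i j : Fin 2) (q : A) :
    psiA k A (single i j (1:k) ⊗ₜ[k] q) = single i j q := by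
  simp [psiA, matrixEquivTensor, MatrixEquivTensor.toFunAlgHom,
    Algebra.TensorProduct.algHomOfLinearMapTensorProduct, MatrixEquivTensor.toFunLinear]

def phi (k : Type*) [Field k] :
    M2' k ⊗[k] (M2' k ⊗[k] M2' k) ≃ₐ[k] Matrix (Fin 2) (Fin 2) (Matrix (Fin 2) (Fin 2) (M2' k)) :=
  (psiA k _).trans (psiA k (M2' k)).mapMatrix

theorem phi_tmul (i j p q : Fin 2) (r : M2' k) :
    phi k (single i j (1:k) ⊗ₜ[k] (single p q (1:k) ⊗ₜ[k] r)) =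
      single i j (single p q r) := by
  rw [phi, AlgEquiv.trans_apply, psiA_tmul, AlgEquiv.mapMatrix_apply]
  ext c d
  by_cases h : i = c ∧ j = d
  · obtain ⟨rfl, rfl⟩ := h; simp [psiA_tmul]
  · simp [Matrix.map_apply, h]

theorem one_M2' : (1 : M2' k) = single 0 0 1 + single 1 1 1 := by
  ext i j; fin_cases i <;> fin_cases j <;> simp [Matrix.one_apply]

theorem phi_tmul_mid_one (i j u v : Fin 2) :
    phi k (single i j (1:k) ⊗ₜ[k] ((1 : M2' k) ⊗ₜ[k] single u v (1:k))) =
      single i j (single 0 0 (single u v (1:k))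
        + single 1 1 (single u v (1:k))) := by
  rw [one_M2', add_tmul, tmul_add, map_add, phi_tmul, phi_tmul, ← Matrix.single_add]

theorem phi_one_tmul (p q u v : Fin 2) :
    phi k ((1 : M2' k) ⊗ₜ[k] (single p q (1:k) ⊗ₜ[k] single u v (1:k))) =
      single 0 0 (single p q (single u v (1:k)))
        + single 1 1 (single p q (single u v (1:k))) := by
  rw [one_M2', add_tmul, map_add, phi_tmul, phi_tmul]

def P12 (a b c d x : k) : Matrix (Fin 2) (Fin 2) (Matrix (Fin 2) (Fin 2) (M2' k)) :=
  a • single 0 0 (single 0 0 (1 : M2' k)) +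
  b • single 0 0 (single 1 1 (1 : M2' k)) +
  c • single 1 1 (single 0 0 (1 : M2' k)) +
  d • single 1 1 (single 1 1 (1 : M2' k)) +
  x • single 0 1 (single 1 0 (1 : M2' k))

def P13 (a b c d x : k) : Matrix (Fin 2) (Fin 2) (Matrix (Fin 2) (Fin 2) (M2' k)) :=
  a • single 0 0 (single 0 0 (single 0 0 (1:k)) + single 1 1 (single 0 0 (1:k))) +
  b • single 0 0 (single 0 0 (single 1 1 (1:k)) + single 1 1 (single 1 1 (1:k))) +
  c • single 1 1 (single 0 0 (single 0 0 (1:k)) + single 1 1 (single 0 0 (1:k))) +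
  d • single 1 1 (single 0 0 (single 1 1 (1:k)) + single 1 1 (single 1 1 (1:k))) +
  x • single 0 1 (single 0 0 (single 1 0 (1:k)) + single 1 1 (single 1 0 (1:k)))

def P23 (a b c d x : k) : Matrix (Fin 2) (Fin 2) (Matrix (Fin 2) (Fin 2) (M2' k)) :=
  a • (single 0 0 (single 0 0 (single 0 0 (1:k))) + single 1 1 (single 0 0 (single 0 0 (1:k)))) +
  b • (single 0 0 (single 0 0 (single 1 1 (1:k))) + single 1 1 (single 0 0 (single 1 1 (1:k)))) +
  c • (single 0 0 (single 1 1 (single 0 0 (1:k))) + single 1 1 (single 1 1 (single 0 0 (1:k)))) +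
  d • (single 0 0 (single 1 1 (single 1 1 (1:k))) + single 1 1 (single 1 1 (single 1 1 (1:k)))) +
  x • (single 0 0 (single 0 1 (single 1 0 (1:k))) + single 1 1 (single 0 1 (single 1 0 (1:k))))

theorem mul_sb01 {R : Type*} [Ring R] (i l : Fin 2) (C D : R) :
    single i 0 C * single 1 l D = 0 := by simp

theorem mul_sb10 {R : Type*} [Ring R] (i l : Fin 2) (C D : R) :
    single i 1 C * single 0 l D = 0 := by simp

set_option maxHeartbeats 1000000 in
theorem forward1 (a b c d x : k)
    (H : P12 a b c d x * P13 a b c d x * P23 a b c d x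
       = P23 a b c d x * P13 a b c d x * P12 a b c d x) :
    x * (a ^ 2 - b * c) = x ^ 2 * a := by
  have h : (P12 a b c d x * P13 a b c d x * P23 a b c d x) (0:Fin 2) (1:Fin 2) (0:Fin 2) (0:Fin 2) (1:Fin 2) (0:Fin 2)
      = (P23 a b c d x * P13 a b c d x * P12 a b c d x) (0:Fin 2) (1:Fin 2) (0:Fin 2) (0:Fin 2) (1:Fin 2) (0:Fin 2) := by rw [H]
  simp only [P12, P13, P23, Matrix.mul_apply, Fin.sum_univ_two, Matrix.add_apply,
    Matrix.smul_apply, Matrix.one_apply, Matrix.single_apply_same, smul_eq_mul] at h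
  simp [Matrix.one_apply] at h
  linear_combination h

set_option maxHeartbeats 1000000 in
theorem forward2 (a b c d x : k)
    (H : P12 a b c d x * P13 a b c d x * P23 a b c d x
       = P23 a b c d x * P13 a b c d x * P12 a b c d x) :
    x * (d ^ 2 - b * c) = x ^ 2 * d := by
  have hX : (P12 a b c d x * P13 a b c d x * P23 a b c d x) (0:Fin 2) (1:Fin 2) (1:Fin 2) (1:Fin 2) (1:Fin 2) (0:Fin 2)
      = (P23 a b c d x * P13 a b c d x * P12 a b c d x) (0:Fin 2) (1:Fin 2) (1:Fin 2) (1:Fin 2) (1:Fin 2) (0:Fin 2) := by rw [H]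
  simp only [P12, P13, P23, Matrix.mul_apply, Fin.sum_univ_two, Matrix.add_apply,
    Matrix.smul_apply, Matrix.one_apply, Matrix.single_apply_same, smul_eq_mul] at hX
  simp [Matrix.one_apply] at hX
  linear_combination -hX

set_option maxHeartbeats 2000000 in
theorem backward (a b c d x : k)
    (h1 : x * (a ^ 2 - b * c) = x ^ 2 * a) (h2 : x * (d ^ 2 - b * c) = x ^ 2 * d) :
    P12 a b c d x * P13 a b c d x * P23 a b c d x
       = P23 a b c d x * P13 a b c d x * P12 a b c d x := by
  simp only [P12, P13, P23, mul_add, add_mul, smul_mul_assoc, mul_smul_comm, smul_smul,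
    Matrix.single_mul_single_same, mul_sb01, mul_sb10, zero_mul, mul_zero, smul_zero,
    add_zero, zero_add, one_mul, mul_one, Matrix.single_zero]
  match_scalars
  any_goals ring
  all_goals first | linear_combination h1 | linear_combination h2 | linear_combination -h1 | linear_combination -h2

end YBAux

set_option synthInstance.maxHeartbeats 1000000 in
set_option maxHeartbeats 4000000 in
open TensorProduct in
/-- the 4×4 matrix `R = [[a,0,0,0],[0,b,x,0],[0,0,c,0],[0,0,0,d]]`
(with `a,b,c,d,x ∈ k*`) satisfies the quantum Yang–Baxter equation iff
`x(a² - bc) = x²a` and `x(d² - bc) = x²d`; equivalently `a² ≠ bc`,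
(`a = d` or `ad = -bc`) and `x = a - bc/a`, in which case also `x = d - bc/d`. -/
theorem fourByFour_yangBaxter_iff {k : Type*} [Field k]
    (a b c d x : k) (ha : a ≠ 0) (hb : b ≠ 0) (hc : c ≠ 0) (hd : d ≠ 0) (hx : x ≠ 0)
    (E : Fin 2 → Fin 2 → Matrix (Fin 2) (Fin 2) k)
    (hE : E = fun i j => Matrix.single i j (1 : k))
    (R : Matrix (Fin 2) (Fin 2) k ⊗[k] Matrix (Fin 2) (Fin 2) k)
    (hR : R = a • (E 0 0 ⊗ₜ[k] E 0 0) + b • (E 0 0 ⊗ₜ[k] E 1 1) +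
        c • (E 1 1 ⊗ₜ[k] E 0 0) + d • (E 1 1 ⊗ₜ[k] E 1 1) + x • (E 0 1 ⊗ₜ[k] E 1 0)) :
    (YangBaxter k (Matrix (Fin 2) (Fin 2) k) R ↔
        (x * (a ^ 2 - b * c) = x ^ 2 * a ∧ x * (d ^ 2 - b * c) = x ^ 2 * d)) ∧
      (YangBaxter k (Matrix (Fin 2) (Fin 2) k) R ↔
        (a ^ 2 ≠ b * c ∧ (a = d ∨ a * d = -(b * c)) ∧ x = a - b * c / a)) ∧
      (YangBaxter k (Matrix (Fin 2) (Fin 2) k) R → x = d - b * c / d) := by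
  subst hE
  have h12 : phi k (rho12 k (Matrix (Fin 2) (Fin 2) k) R) = P12 a b c d x := by
    rw [hR]
    simp only [map_add, map_smul, rho12, Algebra.TensorProduct.map_tmul, AlgHom.coe_id, id_eq,
      Algebra.TensorProduct.includeLeft_apply, phi_tmul, P12]
  have h13 : phi k (rho13 k (Matrix (Fin 2) (Fin 2) k) R) = P13 a b c d x := by
    rw [hR]
    simp only [map_add, map_smul, rho13, Algebra.TensorProduct.map_tmul, AlgHom.coe_id, id_eq,
      Algebra.TensorProduct.includeRight_apply, phi_tmul_mid_one, P13]
  have h23 : phi k (rho23 k (Matrix (Fin 2) (Fin 2) k) R) = P23 a b c d x := by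
    rw [hR]
    simp only [map_add, map_smul, rho23, Algebra.TensorProduct.includeRight_apply,
      phi_one_tmul, P23]
  have hY : YangBaxter k (Matrix (Fin 2) (Fin 2) k) R ↔
      (P12 a b c d x * P13 a b c d x * P23 a b c d x
        = P23 a b c d x * P13 a b c d x * P12 a b c d x) := by
    rw [YangBaxter, ← (phi k).injective.eq_iff, map_mul, map_mul, map_mul, map_mul,
      h12, h13, h23]
  have hiff1 : YangBaxter k (Matrix (Fin 2) (Fin 2) k) R ↔
      (x * (a ^ 2 - b * c) = x ^ 2 * a ∧ x * (d ^ 2 - b * c) = x ^ 2 * d) :=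
    hY.trans ⟨fun H => ⟨forward1 a b c d x H, forward2 a b c d x H⟩,
      fun ⟨h1, h2⟩ => backward a b c d x h1 h2⟩
  have halg : (x * (a ^ 2 - b * c) = x ^ 2 * a ∧ x * (d ^ 2 - b * c) = x ^ 2 * d) ↔
      (a ^ 2 ≠ b * c ∧ (a = d ∨ a * d = -(b * c)) ∧ x = a - b * c / a) := by
    constructor
    · rintro ⟨h1, h2⟩
      have e1 : a ^ 2 - b * c = x * a := mul_left_cancel₀ hx (by linear_combination h1)
      have e2 : d ^ 2 - b * c = x * d := mul_left_cancel₀ hx (by linear_combination h2)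
      have hxa : x * a ≠ 0 := mul_ne_zero hx ha
      refine ⟨?_, ?_, ?_⟩
      · intro hcon
        exact hxa (by linear_combination hcon - e1)
      · have h0 : (a - d) * (a * d + b * c) = 0 := by linear_combination d * e1 - a * e2
        rcases mul_eq_zero.1 h0 with h | h
        · exact Or.inl (by linear_combination h)
        · exact Or.inr (by linear_combination h)
      · field_simp
        linear_combination -e1
    · rintro ⟨hne, hor, hxeq⟩
      have e1 : a ^ 2 - b * c = x * a := by
        field_simp at hxeq
        linear_combination -hxeq
      have e2 : d ^ 2 - b * c = x * d := by
        rcases hor with rfl | hbc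
        · exact e1
        · have h0 : a * (d ^ 2 - b * c - x * d) = 0 := by
            linear_combination d * e1 + (d - a) * hbc
          have := (mul_eq_zero.1 h0).resolve_left ha
          linear_combination this
      exact ⟨by linear_combination x * e1, by linear_combination x * e2⟩
  have hlast : YangBaxter k (Matrix (Fin 2) (Fin 2) k) R → x = d - b * c / d := by
    intro H
    obtain ⟨-, h2⟩ := hiff1.1 H
    have e2 : d ^ 2 - b * c = x * d := mul_left_cancel₀ hx (by linear_combination h2)
    field_simp
    linear_combination -e2
  exact ⟨hiff1, hiff1.trans halg, hlast⟩
end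

section
/- Let A = M_n(k) with basis {E_{ij}}, let ρ = Σ ρ_{iℓjm} E_{ij} ⊗ E_{ℓm} ∈ A ⊗ A satisfy: ρ_{iℓjm} ≠ 0 implies {i, ℓ} = {j, m}, ρ_{iℓiℓ} ≠ 0 for all i, ℓ, and for all distinct i, ℓ at least one of ρ_{iℓℓi}, ρ_{ℓiiℓ} is zero. Then ρ is invertible in A ⊗ A, and its inverse Q = Σ Q_{iℓjm} E_{ij} ⊗ E_{ℓm} satisfies: Q_{iℓjm} ≠ 0 implies {i, ℓ} = {j, m}; Q_{iℓiℓ} = 1/ρ_{iℓiℓ} for all i, ℓ; and Q_{iℓℓi} = −ρ_{iℓℓi}/(ρ_{iℓiℓ} ρ_{ℓiℓi}) for distinct i, ℓ. -/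
open TensorProduct

open TensorProduct

/-- `Σ_{i,ℓ,j,m} r_{iℓjm} E_{ij} ⊗ E_{ℓm} ∈ M_n(k) ⊗ M_n(k)`. -/
noncomputable def coeffTensor {k : Type*} [Field k] (n : ℕ)
    (r : Fin n → Fin n → Fin n → Fin n → k) :
    Matrix (Fin n) (Fin n) k ⊗[k] Matrix (Fin n) (Fin n) k :=
  ∑ q : Fin n × Fin n × Fin n × Fin n,
    r q.1 q.2.1 q.2.2.1 q.2.2.2 •
      (Matrix.single q.1 q.2.2.1 (1 : k) ⊗ₜ[k]
        Matrix.single q.2.1 q.2.2.2 (1 : k))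


/-!
The Kronecker isomorphism `Mₙ(k) ⊗ Mₙ(k) ≃ M_{n²}(k)` sends `E_{ij} ⊗ E_{ℓm}` to the matrix unit at
`((i, ℓ), (j, m))`, so the support condition makes `ρ` block diagonal along the orbits
`{(i, ℓ), (ℓ, i)}` of the swap. Each block is `1 × 1` with nonzero entry, or `2 × 2` triangular
with nonzero diagonal, and `Q` is obtained by inverting the blocks one at a time.
-/

theorem Set.pair_eq_pair_iff_prod {α : Type*} {a b c d : α} :
    ({a, b} : Set α) = {c, d} ↔ (c, d) = (a, b) ∨ (c, d) = (a, b).swap := by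
  rw [Set.pair_eq_pair_iff]
  simp only [Prod.ext_iff, Prod.swap, eq_comm]
  tauto

namespace Matrix

variable {ι K : Type*} [DecidableEq ι] [Field K]

/-- Blockwise inverse along the orbits of an involution `σ`: a triangular block
`!![a, b; c, d]` with `b * c = 0` has inverse `!![a⁻¹, -b / (a * d); -c / (a * d), d⁻¹]`. -/
def orbitBlockInv (σ : ι → ι) (M : Matrix ι ι K) : Matrix ι ι K :=
  of fun p q ↦ if q = p then (M p p)⁻¹ else if q = σ p then -M p q / (M p p * M q q) else 0

variable (σ : ι → ι) (M : Matrix ι ι K)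

theorem orbitBlockInv_apply_self (p : ι) : orbitBlockInv σ M p p = (M p p)⁻¹ := by
  simp [orbitBlockInv]

theorem orbitBlockInv_apply_of_ne {p : ι} (hp : σ p ≠ p) :
    orbitBlockInv σ M p (σ p) = -M p (σ p) / (M p p * M (σ p) (σ p)) := by
  simp [orbitBlockInv, hp]

theorem orbitBlockInv_support {p q : ι} (h : orbitBlockInv σ M p q ≠ 0) :
    q = p ∨ q = σ p := by
  by_contra! hq
  exact h (by simp [orbitBlockInv, hq.1, hq.2])

variable {σ M}

theorem orbitBlockInv_mul [Fintype ι] (hσ : Function.Involutive σ)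
    (hsupp : ∀ p q, M p q ≠ 0 → q = p ∨ q = σ p) (hdiag : ∀ p, M p p ≠ 0)
    (htri : ∀ p, σ p ≠ p → M p (σ p) * M (σ p) p = 0) :
    orbitBlockInv σ M * M = 1 := by
  have hM : ∀ p q, q ≠ p → q ≠ σ p → M p q = 0 := fun p q h₁ h₂ ↦
    by_contra fun h ↦ (hsupp p q h).elim h₁ h₂
  have hN : ∀ p s, s ≠ p → s ≠ σ p → orbitBlockInv σ M p s = 0 := fun p s h₁ h₂ ↦
    by_contra fun h ↦ (orbitBlockInv_support σ M h).elim h₁ h₂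
  ext p q
  rw [mul_apply, one_apply]
  by_cases hp : σ p = p
  · rw [Fintype.sum_eq_single p fun s hs ↦ by rw [hN p s hs (hp.symm ▸ hs), zero_mul],
      orbitBlockInv_apply_self]
    by_cases hqp : q = p
    · rw [hqp, if_pos rfl, inv_mul_cancel₀ (hdiag p)]
    · rw [hM p q hqp (hp.symm ▸ hqp), if_neg (Ne.symm hqp), mul_zero]
  rw [Fintype.sum_eq_add p (σ p) (Ne.symm hp) fun s hs ↦ by rw [hN p s hs.1 hs.2, zero_mul],
    orbitBlockInv_apply_self, orbitBlockInv_apply_of_ne σ M hp]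
  by_cases hqp : q = p
  · rw [hqp, if_pos rfl, inv_mul_cancel₀ (hdiag p), div_mul_eq_mul_div, neg_mul, htri p hp]
    simp
  by_cases hqσ : q = σ p
  · rw [hqσ, if_neg (Ne.symm hp)]
    field_simp [hdiag p, hdiag (σ p)]
    ring
  · have hqσσ : q ≠ σ (σ p) := by rwa [hσ p]
    rw [hM p q hqp hqσ, hM (σ p) q hqσ hqσσ, if_neg (Ne.symm hqp)]
    ring

end Matrix

open Matrix in
theorem kroneckerAlgEquiv_coeffTensor {k : Type*} [Field k] {n : ℕ}
    (r : Fin n → Fin n → Fin n → Fin n → k) :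
    kroneckerAlgEquiv (Fin n) (Fin n) k (coeffTensor n r) = of fun p q ↦ r p.1 p.2 q.1 q.2 := by
  ext ⟨i, l⟩ ⟨j, m⟩
  simp [coeffTensor, Matrix.sum_apply, single_kronecker_single, single_apply,
    Fintype.sum_prod_type, ite_and]

/-- under the stated support conditions, `ρ = Σ r_{iℓjm} E_{ij} ⊗ E_{ℓm}`
is invertible, and its inverse `Q = Σ Q_{iℓjm} E_{ij} ⊗ E_{ℓm}` satisfies
`Q_{iℓjm} ≠ 0 → {i,ℓ} = {j,m}`, `Q_{iℓiℓ} = 1/ρ_{iℓiℓ}`, and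
`Q_{iℓℓi} = -ρ_{iℓℓi}/(ρ_{iℓiℓ}ρ_{ℓiℓi})` for `i ≠ ℓ`. -/
theorem coeffTensor_inverse {k : Type*} [Field k] (n : ℕ)
    (r : Fin n → Fin n → Fin n → Fin n → k)
    (hsupp : ∀ i l j m : Fin n, r i l j m ≠ 0 → ({i, l} : Set (Fin n)) = {j, m})
    (hdiag : ∀ i l : Fin n, r i l i l ≠ 0)
    (hoff : ∀ i l : Fin n, i ≠ l → r i l l i = 0 ∨ r l i i l = 0) :
    ∃ Q : Fin n → Fin n → Fin n → Fin n → k,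
      coeffTensor n Q * coeffTensor n r = 1 ∧
      coeffTensor n r * coeffTensor n Q = 1 ∧
      (∀ i l j m : Fin n, Q i l j m ≠ 0 → ({i, l} : Set (Fin n)) = {j, m}) ∧
      (∀ i l : Fin n, Q i l i l = 1 / r i l i l) ∧
      (∀ i l : Fin n, i ≠ l → Q i l l i = -(r i l l i) / (r i l i l * r l i l i)) := by
  let M : Matrix (Fin n × Fin n) (Fin n × Fin n) k := .of fun p q ↦ r p.1 p.2 q.1 q.2
  let N := M.orbitBlockInv Prod.swap
  let Q : Fin n → Fin n → Fin n → Fin n → k := fun i l j m ↦ N (i, l) (j, m)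
  let e := Matrix.kroneckerAlgEquiv (Fin n) (Fin n) k
  have heM : e (coeffTensor n r) = M := kroneckerAlgEquiv_coeffTensor r
  have heN : e (coeffTensor n Q) = N := kroneckerAlgEquiv_coeffTensor Q
  have hNM : N * M = 1 := by
    refine Matrix.orbitBlockInv_mul Prod.swap_swap (fun p q h ↦ ?_) (fun p ↦ hdiag _ _)
      fun ⟨i, l⟩ hp ↦ mul_eq_zero.mpr (hoff i l fun h ↦ hp (by rw [h, Prod.swap_prod_mk]))
    exact Set.pair_eq_pair_iff_prod.mp (hsupp _ _ _ _ h)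
  refine ⟨Q, e.injective ?_, e.injective ?_, fun i l j m h ↦ ?_, fun i l ↦ ?_, fun i l h ↦ ?_⟩
  · rw [map_mul, heN, heM, hNM, map_one]
  · rw [map_mul, heN, heM, mul_eq_one_comm.mp hNM, map_one]
  · exact Set.pair_eq_pair_iff_prod.mpr (Matrix.orbitBlockInv_support _ _ h)
  · rw [one_div]
    exact Matrix.orbitBlockInv_apply_self _ _ (i, l)
  · exact Matrix.orbitBlockInv_apply_of_ne _ _ (p := (i, l)) fun h' ↦ h (congrArg Prod.snd h')
end

section
/- Let r ∈ k*, r ≠ 1, and fix a function ε: {1, …, n} → {0, 1} (ε(i) = 1 meaning 'aᵢ = a'). For x ∈ k* with x ≠ 1 define ωᵢ(x)² = −(−x)^{−ε(i)} x^{η₊(0:i) − η₋(0:i)}, where η₊(ℓ:m) = |{i : ℓ < i ≤ m, ε(i) = 1}| and η₋(ℓ:m) = |{i : ℓ < i ≤ m, ε(i) = 0}|. Then for all 0 ≤ ℓ ≤ n: Σ_{j=1}^{ℓ} ωⱼ(x)² = (1 − x^{η₊(0:ℓ) − η₋(0:ℓ)})/(1 − x). -/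
/-!
Write `η(m) = η₊(0:m) - η₋(0:m)` (`signedCount ε m`), so that `η(j) = η(j-1) + 1`
if `ε(j) = 1` and `η(j) = η(j-1) - 1` if `ε(j) = 0`. In both cases
`ωⱼ(x)² = (x^{η(j-1)} - x^{η(j)}) / (1 - x)`, and the sum telescopes from `η(0) = 0`.
-/

open Finset

def signedCount (ε : ℕ → Bool) (m : ℕ) : ℤ :=
  (((Ioc 0 m).filter fun i => ε i = true).card : ℤ) -
    (((Ioc 0 m).filter fun i => ε i = false).card : ℤ)

@[simp]
lemma signedCount_zero (ε : ℕ → Bool) : signedCount ε 0 = 0 := by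
  simp [signedCount]

lemma signedCount_succ (ε : ℕ → Bool) (m : ℕ) :
    signedCount ε (m + 1) = signedCount ε m + if ε (m + 1) then 1 else -1 := by
  have hIoc : Ioc 0 (m + 1) = insert (m + 1) (Ioc 0 m) :=
    (insert_Ioc_right_eq_Ioc_add_one m.zero_le).symm
  have hnotMem (p : ℕ → Prop) [DecidablePred p] : m + 1 ∉ (Ioc 0 m).filter p := by simp
  unfold signedCount
  rw [hIoc, filter_insert, filter_insert]
  cases ε (m + 1) <;> simp only [if_true, if_false, Bool.false_eq_true, reduceCtorEq,
    card_insert_of_notMem (hnotMem _)] <;> push_cast <;> ring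

lemma omega_sq_eq_div {k : Type*} [Field k] {x : k} (hx0 : x ≠ 0) (hx1 : x ≠ 1)
    (ε : ℕ → Bool) (j : ℕ) :
    -((-x) ^ (-(if ε (j + 1) then (1 : ℤ) else 0)) * x ^ signedCount ε (j + 1)) =
      (x ^ signedCount ε j - x ^ signedCount ε (j + 1)) / (1 - x) := by
  have h1x : (1 : k) - x ≠ 0 := sub_ne_zero.mpr hx1.symm
  rw [eq_div_iff h1x, signedCount_succ]
  cases ε (j + 1)
  · simp only [Bool.false_eq_true, if_false, neg_zero, zpow_zero, zpow_add₀ hx0, zpow_neg_one]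
    field_simp
    ring
  · simp only [if_true, zpow_add₀ hx0, zpow_neg_one, zpow_one, inv_neg]
    field_simp

/-- with `ωⱼ(x)² = -(-x)^{-ε(j)} x^{η₊(0:j) - η₋(0:j)}`, where
`η₊(ℓ:m)` (resp. `η₋(ℓ:m)`) counts the `i` with `ℓ < i ≤ m` and `ε(i) = 1`
(resp. `ε(i) = 0`), one has
`Σ_{j=1}^{ℓ} ωⱼ(x)² = (1 - x^{η₊(0:ℓ) - η₋(0:ℓ)})/(1 - x)` for all `0 ≤ ℓ ≤ n`. -/
theorem sum_omega_sq {k : Type*} [Field k] (n : ℕ) (ε : ℕ → Bool)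
    (x : k) (hx0 : x ≠ 0) (hx1 : x ≠ 1) :
    ∀ l : ℕ, l ≤ n →
      (∑ j ∈ Finset.Icc 1 l,
          -((-x) ^ (-(if ε j then (1 : ℤ) else 0)) *
            x ^ (((((Finset.Ioc 0 j).filter fun i => ε i = true).card : ℤ)) -
                 ((((Finset.Ioc 0 j).filter fun i => ε i = false).card : ℤ))))) =
        (1 - x ^ (((((Finset.Ioc 0 l).filter fun i => ε i = true).card : ℤ)) -
                  ((((Finset.Ioc 0 l).filter fun i => ε i = false).card : ℤ)))) /
          (1 - x) := by
  intro l _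
  change ∑ j ∈ Icc 1 l, -((-x) ^ (-(if ε j then (1 : ℤ) else 0)) * x ^ signedCount ε j) =
    (1 - x ^ signedCount ε l) / (1 - x)
  induction l with
  | zero => simp
  | succ l ih =>
    rw [sum_Icc_succ_top (by omega), ih (by omega), omega_sq_eq_div hx0 hx1]
    ring
end
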